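/- arXiv:2210.11214 — 2 statements merged into one kernel-verified Lean document; each statement's English description precedes it below -/
import Mathlib

section
/- Let V be a finite-dimensional real inner product space, let v₁, …, v_k ∈ V span a linear subspace W, let w₁, …, w_d ∈ V be arbitrary vectors, and let π : V → V denote the orthogonal projection onto the orthogonal complement W^⊥. Then det Gram(v₁,…,v_k, w₁,…,w_d) = det Gram(v₁,…,v_k) · det Gram(π(w₁),…,π(w_d)). Equivalently, ‖v₁∧⋯∧v_k∧w₁∧⋯∧w_d‖ = ‖v₁∧⋯∧v_k‖ · ‖π(w₁)∧⋯∧π(w_d)‖. -/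
/-!
Write each `w j` as `p j + q j` with `p j ∈ W` and `q j = π (w j) ∈ Wᗮ`. Since `p j` is a linear
combination of the `v i`, the family `(v, w)` is the image of `(v, q)` under a block unitriangular
matrix `T`, and `Gram(v, w) = Tᵀ Gram(v, q) T` has the same determinant as `Gram(v, q)`. The latter
is block diagonal because `v ⊥ q`.
-/

open scoped RealInnerProductSpace

noncomputable def gramDet {V : Type*} [NormedAddCommGroup V] [InnerProductSpace ℝ V]
    {n : ℕ} (v : Fin n → V) : ℝ :=
  (Matrix.of fun i j => ⟪v i, v j⟫).det

open Matrix Submodule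
open scoped InnerProductSpace

namespace Matrix

variable {𝕜 E : Type*} [RCLike 𝕜] [NormedAddCommGroup E] [InnerProductSpace 𝕜 E]
  {ι κ : Type*}

theorem gram_sum_smul [Fintype ι] (u : ι → E) (T : Matrix ι κ 𝕜) :
    gram 𝕜 (fun j => ∑ i, T i j • u i) = Tᴴ * gram 𝕜 u * T := by
  ext a b
  simp only [gram_apply, sum_inner, inner_sum, inner_smul_left, inner_smul_right, mul_apply,
    conjTranspose_apply, RCLike.star_def, Finset.sum_mul, Finset.mul_sum]
  exact Finset.sum_congr rfl fun _ _ => Finset.sum_congr rfl fun _ _ => by ring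

theorem gram_sumElim_of_inner_eq_zero {v : ι → E} {q : κ → E}
    (h : ∀ i j, ⟪v i, q j⟫_𝕜 = 0) :
    gram 𝕜 (Sum.elim v q) = fromBlocks (gram 𝕜 v) 0 0 (gram 𝕜 q) := by
  ext (i | i) (j | j)
  · rfl
  · exact h i j
  · exact inner_eq_zero_symm.mp (h j i)
  · rfl

variable [Fintype ι] [Fintype κ] [DecidableEq ι] [DecidableEq κ]

theorem det_gram_sumElim_of_inner_eq_zero {v : ι → E} {q : κ → E}
    (h : ∀ i j, ⟪v i, q j⟫_𝕜 = 0) :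
    (gram 𝕜 (Sum.elim v q)).det = (gram 𝕜 v).det * (gram 𝕜 q).det := by
  rw [gram_sumElim_of_inner_eq_zero h, det_fromBlocks_zero₁₂]

theorem det_gram_sumElim_add_of_mem_span (v : ι → E) {p : κ → E} (q : κ → E)
    (hp : ∀ j, p j ∈ span 𝕜 (Set.range v)) :
    (gram 𝕜 (Sum.elim v (p + q))).det = (gram 𝕜 (Sum.elim v q)).det := by
  choose C hC using fun j => (mem_span_range_iff_exists_fun 𝕜).mp (hp j)
  set T : Matrix (ι ⊕ κ) (ι ⊕ κ) 𝕜 := fromBlocks 1 (of fun i j => C j i) 0 1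
  have hT : Sum.elim v (p + q) = fun j => ∑ i, T i j • Sum.elim v q i := by
    ext (j | j) <;> simp [T, Fintype.sum_sum_type, ← hC, one_apply]
  have hdetT : T.det = 1 := by simp [T]
  rw [hT, gram_sum_smul, det_mul, det_mul, det_conjTranspose, hdetT]
  simp

end Matrix

theorem gramDet_append_eq_det_gram_sumElim {V : Type*} [NormedAddCommGroup V]
    [InnerProductSpace ℝ V] {k d : ℕ} (v : Fin k → V) (w : Fin d → V) :
    gramDet (Fin.append v w) = (gram ℝ (Sum.elim v w)).det := by
  rw [← Fin.append_comp_sumElim]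
  exact (det_submatrix_equiv_self finSumFinEquiv _).symm

/-- If `v₁,…,v_k` span a subspace `W` and `π` is the orthogonal projection onto `Wᗮ`, then
`det Gram(v,w) = det Gram(v) · det Gram(π w)` for any vectors `w₁,…,w_d`. -/
theorem gramDet_append_eq_mul_gramDet_orthogonalProjection
    {V : Type*} [NormedAddCommGroup V] [InnerProductSpace ℝ V] [FiniteDimensional ℝ V]
    {k d : ℕ} (v : Fin k → V) (w : Fin d → V)
    (W : Submodule ℝ V) (hW : W = Submodule.span ℝ (Set.range v)) :
    gramDet (Fin.append v w) =
      gramDet v * gramDet fun i => ((Submodule.orthogonalProjectionOnto Wᗮ (w i) : V)) := by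
  set q : Fin d → V := fun i => Wᗮ.orthogonalProjectionOnto (w i)
  have hw : w = (fun i => W.starProjection (w i)) + q := by
    ext i
    simp [q]
  have hvq : ∀ i j, ⟪v i, q j⟫ = 0 := fun i j =>
    (mem_orthogonal W (q j)).mp (coe_mem _) (v i) (hW ▸ subset_span ⟨i, rfl⟩)
  rw [gramDet_append_eq_det_gram_sumElim, hw,
    det_gram_sumElim_add_of_mem_span v q fun i => hW ▸ W.starProjection_apply_mem (w i),
    det_gram_sumElim_of_inner_eq_zero hvq]
  rfl
end

section
/- Let V be a finite-dimensional real inner product space, let x₁, …, x_k, u₁, …, u_k ∈ V, and let π : V → V denote the orthogonal projection onto the span of u₁, …, u_k. Then |det(⟨x_i, u_j⟩)_{1≤i,j≤k}| = √(det Gram(u₁,…,u_k)) · √(det Gram(π(x₁),…,π(x_k))). Equivalently, |⟨x₁∧⋯∧x_k, u₁∧⋯∧u_k⟩| = ‖u₁∧⋯∧u_k‖ · ‖π(x₁)∧⋯∧π(x_k)‖. -/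
/-! If the `u j` are linearly dependent, so are the columns of the matrix on the left and of the
Gram matrix of `u`, and both sides vanish. Otherwise they span a `k`-dimensional space `U`, and
since `⟪x, u⟫ = ⟪π x, u⟫` for `u ∈ U`, everything happens inside `U`. In an orthonormal basis of
`U`, the matrix `(⟪π x i, u j⟫)` is the product of the coordinate matrix of `π x` with the
transposed coordinate matrix of `u`, and the absolute values of these two coordinate determinants
are the square roots of the Gram determinants. -/

open scoped RealInnerProductSpace

section

variable {E F : Type*} [NormedAddCommGroup E] [InnerProductSpace ℝ E]
  [NormedAddCommGroup F] [InnerProductSpace ℝ F]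

theorem det_inner_eq_zero_of_not_linearIndependent {n : Type*} [Fintype n] [DecidableEq n]
    (v w : n → E) (hw : ¬ LinearIndependent ℝ w) :
    (Matrix.of fun i j => ⟪v i, w j⟫).det = 0 :=
  Matrix.det_eq_zero_of_not_linearIndependent_cols fun hcols =>
    hw (.of_comp (LinearMap.pi fun i => innerₗ E (v i)) hcols)

theorem det_inner_eq_det_mul_det {n : Type*} [Fintype n] [DecidableEq n]
    (b : OrthonormalBasis n ℝ E) (v w : n → E) :
    (Matrix.of fun i j => ⟪v i, w j⟫).det =
      (Matrix.of fun i a => ⟪b a, v i⟫).det * (Matrix.of fun j a => ⟪b a, w j⟫).det := by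
  have hfactor : (Matrix.of fun i j => ⟪v i, w j⟫) =
      (Matrix.of fun i a => ⟪b a, v i⟫) * (Matrix.of fun j a => ⟪b a, w j⟫).transpose := by
    ext i j
    simp only [Matrix.mul_apply, Matrix.of_apply, Matrix.transpose_apply, real_inner_comm (v i)]
    exact (b.sum_inner_mul_inner (v i) (w j)).symm
  rw [hfactor, Matrix.det_mul, Matrix.det_transpose]

theorem sqrt_gramDet_eq_abs_det_inner {k : ℕ} (b : OrthonormalBasis (Fin k) ℝ E)
    (v : Fin k → E) : √(gramDet v) = |(Matrix.of fun i a => ⟪b a, v i⟫).det| := by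
  rw [gramDet, det_inner_eq_det_mul_det b, Real.sqrt_mul_self_eq_abs]

theorem gramDet_comp_linearIsometry {n : ℕ} (f : E →ₗᵢ[ℝ] F) (v : Fin n → E) :
    gramDet (f ∘ v) = gramDet v := by
  simp only [gramDet, Function.comp_apply, LinearIsometry.inner_map_map]

theorem abs_det_inner_eq_sqrt_gramDet_mul_sqrt_gramDet [FiniteDimensional ℝ E] {k : ℕ}
    (hk : Module.finrank ℝ E = k) (v w : Fin k → E) :
    |(Matrix.of fun i j => ⟪v i, w j⟫).det| = √(gramDet v) * √(gramDet w) := by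
  let b : OrthonormalBasis (Fin k) ℝ E := (stdOrthonormalBasis ℝ E).reindex (finCongr hk)
  rw [det_inner_eq_det_mul_det b, abs_mul, sqrt_gramDet_eq_abs_det_inner b,
    sqrt_gramDet_eq_abs_det_inner b]

end

/-- For `x₁,…,x_k, u₁,…,u_k` in a finite-dimensional real inner product space and `π` the
orthogonal projection onto the span of the `u`'s:
`|det(⟨x_i,u_j⟩)| = √(det Gram u) · √(det Gram (π x))`, i.e.
`|⟨x₁∧⋯∧x_k, u₁∧⋯∧u_k⟩| = ‖u₁∧⋯∧u_k‖·‖π(x₁)∧⋯∧π(x_k)‖`. -/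
theorem abs_det_inner_eq_sqrt_gram_mul_sqrt_gram_proj
    {V : Type*} [NormedAddCommGroup V] [InnerProductSpace ℝ V] [FiniteDimensional ℝ V]
    {k : ℕ} (x u : Fin k → V)
    (U : Submodule ℝ V) (hU : U = Submodule.span ℝ (Set.range u)) :
    |(Matrix.of fun i j => ⟪x i, u j⟫).det| =
      Real.sqrt (gramDet u) *
        Real.sqrt (gramDet fun i => ((U.orthogonalProjection (x i) : V))) := by
  by_cases hu : LinearIndependent ℝ u
  · have hdim : Module.finrank ℝ U = k := by
      rw [hU, finrank_span_eq_card hu, Fintype.card_fin]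
    let w : Fin k → U := fun j => ⟨u j, hU ▸ Submodule.subset_span ⟨j, rfl⟩⟩
    let y : Fin k → U := fun i => U.orthogonalProjectionOnto (x i)
    have hxu : (Matrix.of fun i j => ⟪x i, u j⟫) = Matrix.of fun i j => ⟪y i, w j⟫ := by
      ext i j
      exact (U.inner_orthogonalProjectionOnto_eq_of_mem_right (w j) (x i)).symm
    rw [hxu, abs_det_inner_eq_sqrt_gramDet_mul_sqrt_gramDet hdim, mul_comm,
      ← gramDet_comp_linearIsometry U.subtypeₗᵢ w, ← gramDet_comp_linearIsometry U.subtypeₗᵢ y]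
    rfl
  · rw [det_inner_eq_zero_of_not_linearIndependent x u hu, gramDet,
      det_inner_eq_zero_of_not_linearIndependent u u hu, Real.sqrt_zero, zero_mul, abs_zero]
end
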